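/- If S ≤ T in the Tamari lattice, then either the composition c(S) recording the sizes of the factors in the maximal / -decomposition of S is strictly coarser than c(T), or c(S) = c(T) and S_i ≤ T_i for all i, where S_i, T_i are the factors of the maximal decompositions. -/
import Mathlib


/-- Planar binary trees, counted by internal nodes. -/
inductive PBT where
  | leaf : PBT
  | node : PBT → PBT → PBT
deriving DecidableEq

namespace PBT

/-- Number of internal nodes. -/
def size : PBT → ℕ
  | leaf => 0
  | node l r => size l + size r + 1

/-- One rotation step, going up in the Tamari order: a right comb
configuration `a·(b·c)` is replaced by a left comb configuration `(a·b)·c`,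
possibly deep inside the tree. -/
inductive Rot : PBT → PBT → Prop
  | rotate (a b c : PBT) : Rot (node a (node b c)) (node (node a b) c)
  | left {l l' : PBT} (r : PBT) : Rot l l' → Rot (node l r) (node l' r)
  | right (l : PBT) {r r' : PBT} : Rot r r' → Rot (node l r) (node l r')

/-- The Tamari order: the reflexive-transitive closure of rotation. -/
def le (S T : PBT) : Prop := Relation.ReflTransGen Rot S T

/-- The unique tree with one internal node. -/
def Y : PBT := node leaf leaf

/-- `S / T`: graft the root of `S` onto the leftmost leaf of `T`. -/
def graftL : PBT → PBT → PBT
  | S, leaf => S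
  | S, node l r => node (graftL S l) r

/-- `T₁ / T₂ / ⋯ / T_k` for a list of trees (the empty graft is the trivial tree). -/
def listGraft (L : List PBT) : PBT := L.foldr graftL leaf

/-- A (nontrivial) tree is indecomposable if it is not of the form `S / T`
with `S`, `T` both nontrivial. -/
def Indec (T : PBT) : Prop :=
  T ≠ leaf ∧ ¬ ∃ S U : PBT, S ≠ leaf ∧ U ≠ leaf ∧ graftL S U = T

end PBT

namespace PBT

/-- The maximal decomposition of a tree along its left border:
`maxDecomp T = [T₁, …, T_k]` with `T = T₁ / ⋯ / T_k` and each `Tᵢ` indecomposable. -/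
def maxDecomp : PBT → List PBT
  | leaf => []
  | node l r => maxDecomp l ++ [node leaf r]

/-- The composition `c(T)` recording the sizes of the factors of the maximal
decomposition of `T`. -/
def comp (T : PBT) : List ℕ := (maxDecomp T).map size

end PBT

/-- A composition `c` is coarser than `c'` if `c` is obtained from `c'` by merging
consecutive blocks. -/
def Coarser (c c' : List ℕ) : Prop :=
  ∃ P : List (List ℕ), (∀ b ∈ P, b ≠ []) ∧ P.flatten = c' ∧ P.map List.sum = c

namespace PBT

lemma rot_size {S T : PBT} (h : Rot S T) : size S = size T := by
  induction h with
  | rotate a b c => simp [size]; omega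
  | left r _ ih => simp [size, ih]
  | right l _ ih => simp [size, ih]

lemma forall2_le_refl (L : List PBT) : List.Forall₂ le L L :=
  List.forall₂_same.2 fun _ _ => Relation.ReflTransGen.refl

lemma forall2_le_trans {A B C : List PBT} (h1 : List.Forall₂ le A B)
    (h2 : List.Forall₂ le B C) : List.Forall₂ le A C := by
  induction h1 generalizing C with
  | nil => cases h2; exact List.Forall₂.nil
  | cons hab _ ih =>
    cases h2 with
    | cons hbc h2' => exact List.Forall₂.cons (Relation.ReflTransGen.trans hab hbc) (ih h2')

end PBT

lemma flatten_map_singleton (c : List ℕ) : (c.map (fun x => [x])).flatten = c := by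
  induction c with
  | nil => rfl
  | cons a l ih => simp [ih]

lemma coarser_refl (c : List ℕ) : Coarser c c := by
  refine ⟨c.map (fun x => [x]), ?_, flatten_map_singleton c, ?_⟩
  · intro b hb
    simp only [List.mem_map] at hb
    obtain ⟨x, _, rfl⟩ := hb
    simp
  · induction c with
    | nil => rfl
    | cons a l ih => simp_all

lemma coarser_length {a b : List ℕ} (h : Coarser a b) :
    a.length ≤ b.length ∧ (a.length = b.length → a = b) := by
  obtain ⟨P, hne, hflat, hsum⟩ := h
  subst hflat hsum
  induction P with
  | nil => simp
  | cons p P ih =>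
    have hp : p ≠ [] := hne p (by simp)
    have hplen : 1 ≤ p.length := List.length_pos_iff.2 hp
    obtain ⟨hle, heq⟩ := ih (fun b hb => hne b (by simp [hb]))
    simp only [List.map_cons, List.flatten_cons, List.length_cons, List.length_append]
    constructor
    · omega
    · intro hl
      have hp1 : p.length = 1 := by omega
      obtain ⟨x, rfl⟩ := List.length_eq_one_iff.1 hp1
      have : (List.map List.sum P).length = P.flatten.length := by omega
      simp [heq this]

lemma coarser_lt_length {a b : List ℕ} (h : Coarser a b) (hne : a ≠ b) :
    a.length < b.length := by
  obtain ⟨hle, heq⟩ := coarser_length h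
  rcases lt_or_eq_of_le hle with h' | h'
  · exact h'
  · exact absurd (heq h') hne

lemma coarser_trans {a b c : List ℕ} (h1 : Coarser a b) (h2 : Coarser b c) :
    Coarser a c := by
  obtain ⟨P, hPne, hPflat, hPsum⟩ := h1
  obtain ⟨Q, hQne, hQflat, hQsum⟩ := h2
  subst hPsum hQflat hPflat
  induction P generalizing Q with
  | nil =>
    have : Q = [] := List.map_eq_nil_iff.1 hQsum
    subst this
    exact ⟨[], by simp, rfl, rfl⟩
  | cons p P ih =>
    have hsplit : List.map List.sum Q = p ++ P.flatten := hQsum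
    obtain ⟨Q1, Q2, rfl, hQ1, hQ2⟩ := List.map_eq_append_iff.1 hsplit
    have hQ1ne : ∀ x ∈ Q1, x ≠ [] := fun x hx => hQne x (by simp [hx])
    have hQ2ne : ∀ x ∈ Q2, x ≠ [] := fun x hx => hQne x (by simp [hx])
    obtain ⟨R, hRne, hRflat, hRsum⟩ :=
      ih (fun x hx => hPne x (by simp [hx])) Q2 hQ2ne hQ2
    refine ⟨Q1.flatten :: R, ?_, ?_, ?_⟩
    · intro x hx
      rcases List.mem_cons.1 hx with rfl | hx
      · intro hfl
        have hall := List.flatten_eq_nil_iff.1 hfl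
        have : Q1 ≠ [] := by
          intro h
          subst h
          exact hPne p (by simp) (by simpa using hQ1.symm)
        obtain ⟨q, Q1', rfl⟩ := List.exists_cons_of_ne_nil this
        exact hQ1ne q (by simp) (hall q (by simp))
      · exact hRne x hx
    · simp [hRflat]
    · simp only [List.map_cons, hRsum, List.sum_flatten, hQ1]

namespace PBT

/-- The combined relation used in the induction. -/
def Rel (S T : PBT) : Prop :=
  (Coarser (comp S) (comp T) ∧ comp S ≠ comp T) ∨
    (comp S = comp T ∧ List.Forall₂ le (maxDecomp S) (maxDecomp T))

lemma rel_trans {S T U : PBT} (h1 : Rel S T) (h2 : Rel T U) : Rel S U := by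
  rcases h1 with ⟨hc1, hne1⟩ | ⟨heq1, hf1⟩
  · rcases h2 with ⟨hc2, hne2⟩ | ⟨heq2, _⟩
    · left
      refine ⟨coarser_trans hc1 hc2, ?_⟩
      have l1 := coarser_lt_length hc1 hne1
      have l2 := coarser_lt_length hc2 hne2
      intro h
      rw [h] at l1
      omega
    · left
      rw [heq2] at hc1 hne1
      exact ⟨hc1, hne1⟩
  · rcases h2 with ⟨hc2, hne2⟩ | ⟨heq2, hf2⟩
    · left
      rw [← heq1] at hc2 hne2
      exact ⟨hc2, hne2⟩
    · right
      exact ⟨heq1.trans heq2, forall2_le_trans hf1 hf2⟩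

lemma comp_node (l r : PBT) : comp (node l r) = comp l ++ [size r + 1] := by
  simp [comp, maxDecomp, size]

lemma rot_rel {S T : PBT} (h : Rot S T) : Rel S T := by
  induction h with
  | rotate a b c =>
    left
    have hS : comp (node a (node b c)) = comp a ++ [size b + size c + 2] := by
      simp [comp_node, size]
    have hT : comp (node (node a b) c) = comp a ++ [size b + 1, size c + 1] := by
      simp [comp_node, comp, maxDecomp, size]
    rw [hS, hT]
    constructor
    · refine ⟨(comp a).map (fun x => [x]) ++ [[size b + 1, size c + 1]], ?_, ?_, ?_⟩
      · intro x hx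
        simp only [List.mem_append, List.mem_map, List.mem_singleton] at hx
        rcases hx with ⟨y, _, rfl⟩ | rfl <;> simp
      · simp [flatten_map_singleton]
      · have : ((comp a).map (fun x => [x])).map List.sum = comp a := by
          induction comp a with
          | nil => rfl
          | cons y l ih => simp_all
        simp only [List.map_append, this]
        simp
        omega
    · intro h
      have := congrArg List.length h
      simp at this
  | left r hrot ih =>
    rcases ih with ⟨hc, hne⟩ | ⟨heq, hf⟩
    · left
      rw [comp_node, comp_node]
      constructor
      · obtain ⟨P, hPne, hPflat, hPsum⟩ := hc
        refine ⟨P ++ [[size r + 1]], ?_, ?_, ?_⟩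
        · intro x hx
          simp only [List.mem_append, List.mem_singleton] at hx
          rcases hx with hx | rfl
          · exact hPne x hx
          · simp
        · simp [hPflat]
        · simp [hPsum]
      · intro h
        exact hne (List.append_cancel_right h)
    · right
      constructor
      · rw [comp_node, comp_node, heq]
      · simp only [maxDecomp]
        exact List.rel_append hf (forall2_le_refl [node leaf r])
  | right l hrot ih =>
    right
    constructor
    · rw [comp_node, comp_node, rot_size hrot]
    · simp only [maxDecomp]
      refine List.rel_append (forall2_le_refl (maxDecomp l)) ?_
      exact List.Forall₂.cons
        (Relation.ReflTransGen.single (Rot.right leaf hrot)) List.Forall₂.nil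

end PBT

/-- If `S ≤ T` in the Tamari lattice, then either `c(S)` is strictly coarser than
`c(T)`, or `c(S) = c(T)` and the factors of the maximal decompositions satisfy
`Sᵢ ≤ Tᵢ` for all `i`. -/
theorem tamari_le_comp (S T : PBT) (h : PBT.le S T) :
    (Coarser (PBT.comp S) (PBT.comp T) ∧ PBT.comp S ≠ PBT.comp T) ∨
    (PBT.comp S = PBT.comp T ∧
      List.Forall₂ PBT.le (PBT.maxDecomp S) (PBT.maxDecomp T)) := by
  have : PBT.Rel S T := by
    induction h with
    | refl => exact Or.inr ⟨rfl, PBT.forall2_le_refl _⟩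
    | tail _ hrot ih => exact PBT.rel_trans ih (PBT.rot_rel hrot)
  exact this
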